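/- arXiv:1912.03460 — 2 statements merged into one kernel-verified Lean document; each statement's English description precedes it below -/
import Mathlib

section
/- Let f : ℝⁿ → ℝ ∪ {+∞} be a closed (lower semicontinuous), proper, convex function whose effective domain dom f is nonempty and convex. If f is steep — i.e., f is differentiable on the relative interior rint(dom f) and ‖∇f(x_k)‖ → +∞ for every sequence (x_k) in rint(dom f) converging to a point of the relative boundary of dom f — then no point of the relative boundary of dom f belongs to dom ∂f, and dom ∂f = rint(dom f). -/
open Set Filter Topology

noncomputable section

abbrev E (n : ℕ) : Type := EuclideanSpace ℝ (Fin n)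

/-- effective domain of an extended-real-valued function -/
def edom {n : ℕ} (f : E n → EReal) : Set (E n) := {x | f x < ⊤}

/-- proper: never −∞ and not identically +∞ -/
def properE {n : ℕ} (f : E n → EReal) : Prop := (∀ x, f x ≠ ⊥) ∧ ∃ x, f x ≠ ⊤

def convexE {n : ℕ} (f : E n → EReal) : Prop :=
  ∀ x y : E n, ∀ a b : ℝ, 0 ≤ a → 0 ≤ b → a + b = 1 →
    f (a • x + b • y) ≤ (a : EReal) * f x + (b : EReal) * f y

def stronglyConvexE {n : ℕ} (ρ : ℝ) (f : E n → EReal) : Prop :=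
  convexE (fun x => f x - (((ρ / 2) * ‖x‖ ^ 2 : ℝ) : EReal))

def subdiff {n : ℕ} (f : E n → EReal) (x : E n) : Set (E n) :=
  {v | ∀ y : E n, f x + ((inner ℝ v (y - x) : ℝ) : EReal) ≤ f y}

def domSubdiff {n : ℕ} (f : E n → EReal) : Set (E n) := {x | (subdiff f x).Nonempty}

/-- relative boundary -/
def rbd {n : ℕ} (s : Set (E n)) : Set (E n) := closure s \ intrinsicInterior ℝ s

def Steep {n : ℕ} (f : E n → EReal) : Prop :=
  ∃ g : E n → E n,
    (∀ x ∈ intrinsicInterior ℝ (edom f),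
      HasGradientAt (fun y => (f y).toReal) (g x) x) ∧
    ∀ (xs : ℕ → E n) (p : E n),
      (∀ k, xs k ∈ intrinsicInterior ℝ (edom f)) →
      p ∈ rbd (edom f) → Tendsto xs atTop (nhds p) →
      Tendsto (fun k => ‖g (xs k)‖) atTop atTop

def NonSteep {n : ℕ} (f : E n → EReal) : Prop :=
  ∃ g : E n → E n,
    (∀ x ∈ intrinsicInterior ℝ (edom f),
      HasGradientAt (fun y => (f y).toReal) (g x) x) ∧
    ∀ (xs : ℕ → E n) (p : E n),
      (∀ k, xs k ∈ intrinsicInterior ℝ (edom f)) →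
      p ∈ rbd (edom f) → Tendsto xs atTop (nhds p) →
      ∃ M : ℝ, ∀ k, ‖g (xs k)‖ ≤ M

/-- convex conjugate -/
def conjE {n : ℕ} (f : E n → EReal) (z : E n) : EReal :=
  ⨆ x : E n, (((inner ℝ x z : ℝ) : EReal) - f x)

def strictConvexOnE {n : ℕ} (s : Set (E n)) (f : E n → EReal) : Prop :=
  ∀ x ∈ s, ∀ y ∈ s, x ≠ y → ∀ a b : ℝ, 0 < a → 0 < b → a + b = 1 →
    f (a • x + b • y) < (a : EReal) * f x + (b : EReal) * f y

def EssentiallySmoothE {n : ℕ} (f : E n → EReal) : Prop :=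
  ∃ g : E n → E n,
    (∀ x ∈ interior (edom f), HasGradientAt (fun y => (f y).toReal) (g x) x) ∧
    ∀ (xs : ℕ → E n) (p : E n),
      (∀ k, xs k ∈ interior (edom f)) → p ∈ frontier (edom f) →
      Tendsto xs atTop (nhds p) →
      Tendsto (fun k => ‖g (xs k)‖) atTop atTop

def EssentiallyStrictlyConvexE {n : ℕ} (f : E n → EReal) : Prop :=
  ∀ s : Set (E n), s ⊆ domSubdiff f → Convex ℝ s → strictConvexOnE s f

def LegendreE {n : ℕ} (f : E n → EReal) : Prop :=
  EssentiallySmoothE f ∧ EssentiallyStrictlyConvexE f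

def SupercoerciveE {n : ℕ} (f : E n → EReal) : Prop :=
  ∀ M : ℝ, ∃ R : ℝ, ∀ x : E n, R ≤ ‖x‖ → ((M * ‖x‖ : ℝ) : EReal) ≤ f x

/-!
Gradients at points of `rint (dom f)` are subgradients, so `rint (dom f) ⊆ dom ∂f ⊆ dom f`.
If a point `p` of the relative boundary had a subgradient `v`, walk from `p` towards a point `y`
of the relative interior. At `x = p + t • (y - p)` the gradient `g` satisfies
`⟪v, y - p⟫ ≤ ⟪g, y - p⟫` by monotonicity of `∂f`, and testing its subgradient inequality at the
point `y + (r / ‖g‖) • g` of a relative ball around `y` on which `f ≤ M` gives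
`r * ‖g‖ ≤ M - f p - ⟪v, y - p⟫`, uniformly in `t`. This contradicts steepness as `t → 0`.
-/

section IntrinsicInterior

variable {F : Type*} [NormedAddCommGroup F] [NormedSpace ℝ F] {s : Set F} {x p y : F}

theorem mem_intrinsicInterior_iff_add_mem :
    x ∈ intrinsicInterior ℝ s ↔ x ∈ affineSpan ℝ s ∧
      ∃ ε > 0, ∀ u ∈ (affineSpan ℝ s).direction, ‖u‖ < ε → x + u ∈ s := by
  constructor
  · rintro ⟨x, hx, rfl⟩
    rw [mem_interior_iff_mem_nhds, nhds_induced, Filter.mem_comap] at hx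
    obtain ⟨U, hU, hUs⟩ := hx
    obtain ⟨ε, hε, hball⟩ := Metric.mem_nhds_iff.1 hU
    refine ⟨x.2, ε, hε, fun u hu hnorm => ?_⟩
    have hmem : (x : F) + u ∈ affineSpan ℝ s := by
      simpa [add_comm] using AffineSubspace.vadd_mem_of_mem_direction hu x.2
    have hin : (⟨(x : F) + u, hmem⟩ : affineSpan ℝ s) ∈ Subtype.val ⁻¹' U := by
      apply hball
      simp only [Metric.mem_ball, dist_eq_norm]
      simpa using hnorm
    exact hUs hin
  · rintro ⟨hx, ε, hε, h⟩
    refine ⟨⟨x, hx⟩, ?_, rfl⟩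
    rw [mem_interior_iff_mem_nhds, nhds_induced, Filter.mem_comap]
    refine ⟨Metric.ball x ε, Metric.ball_mem_nhds x hε, fun ⟨z, hz⟩ hzx => ?_⟩
    have hzx' : z - x ∈ (affineSpan ℝ s).direction := by
      simpa using AffineSubspace.vsub_mem_direction hz hx
    simpa using h _ hzx' (by simpa [dist_eq_norm] using hzx)

theorem exists_forall_add_mem_intrinsicInterior (hx : x ∈ intrinsicInterior ℝ s) :
    ∃ ε > 0, ∀ u ∈ (affineSpan ℝ s).direction, ‖u‖ < ε → x + u ∈ intrinsicInterior ℝ s := by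
  obtain ⟨hxs, ε, hε, hball⟩ := mem_intrinsicInterior_iff_add_mem.1 hx
  refine ⟨ε / 2, by positivity, fun u hu hun => mem_intrinsicInterior_iff_add_mem.2 ⟨?_, ?_⟩⟩
  · simpa [add_comm] using AffineSubspace.vadd_mem_of_mem_direction hu hxs
  · refine ⟨ε / 2, by positivity, fun w hw hwn => ?_⟩
    rw [add_assoc]
    exact hball _ (Submodule.add_mem _ hu hw) ((norm_add_le _ _).trans_lt (by linarith))

variable [FiniteDimensional ℝ F]

/-- Up to a small `u`, the point is `(1 - t) • q + t • (y + w)` with `q ∈ s` close to `p`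
and `w` small. -/
theorem Convex.add_smul_sub_mem_intrinsicInterior (hs : Convex ℝ s) (hp : p ∈ closure s)
    (hy : y ∈ intrinsicInterior ℝ s) {t : ℝ} (ht0 : 0 < t) (ht1 : t ≤ 1) :
    p + t • (y - p) ∈ intrinsicInterior ℝ s := by
  obtain ⟨hyA, ε, hε, hball⟩ := mem_intrinsicInterior_iff_add_mem.1 hy
  set V := (affineSpan ℝ s).direction
  have hpA : p ∈ affineSpan ℝ s :=
    closure_minimal (subset_affineSpan ℝ s) (affineSpan ℝ s).closed_of_finiteDimensional hp
  have hyp : y - p ∈ V := by simpa using AffineSubspace.vsub_mem_direction hyA hpA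
  refine mem_intrinsicInterior_iff_add_mem.2 ⟨?_, t * ε / 2, by positivity, fun u hu hun => ?_⟩
  · simpa [add_comm] using AffineSubspace.vadd_mem_of_mem_direction (V.smul_mem t hyp) hpA
  obtain ⟨q, hq, hqp⟩ := Metric.mem_closure_iff.1 hp (t * ε / 2) (by positivity)
  rw [dist_comm, dist_eq_norm] at hqp
  have hqpV : q - p ∈ V := by
    simpa using AffineSubspace.vsub_mem_direction (subset_affineSpan ℝ s hq) hpA
  set w := t⁻¹ • (u - (1 - t) • (q - p))
  have hwV : w ∈ V := V.smul_mem _ (V.sub_mem hu (V.smul_mem _ hqpV))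
  have hw : ‖w‖ < ε := by
    have : ‖u - (1 - t) • (q - p)‖ < t * ε :=
      calc ‖u - (1 - t) • (q - p)‖ ≤ ‖u‖ + (1 - t) * ‖q - p‖ := by
            grw [norm_sub_le, norm_smul, Real.norm_of_nonneg (by linarith)]
        _ ≤ ‖u‖ + ‖q - p‖ := by nlinarith [norm_nonneg (q - p)]
        _ < t * ε := by linarith
    rwa [norm_smul, Real.norm_of_nonneg (by positivity), inv_mul_lt_iff₀ ht0]
  have hcomb := hs hq (hball w hwV hw) (sub_nonneg.2 ht1) ht0.le (sub_add_cancel 1 t)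
  convert hcomb using 1
  simp only [w, smul_add, smul_smul, mul_inv_cancel₀ ht0.ne', one_smul]
  module

theorem ContinuousOn.exists_forall_le_near_intrinsicInterior {φ : F → ℝ}
    (hφ : ContinuousOn φ (intrinsicInterior ℝ s)) (hy : y ∈ intrinsicInterior ℝ s) :
    ∃ r > 0, ∃ M, ∀ u ∈ (affineSpan ℝ s).direction, ‖u‖ ≤ r →
      y + u ∈ intrinsicInterior ℝ s ∧ φ (y + u) ≤ M := by
  obtain ⟨ε, hε, hball⟩ := exists_forall_add_mem_intrinsicInterior hy
  set K := Metric.closedBall (0 : F) (ε / 2) ∩ (affineSpan ℝ s).direction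
  have hK : ∀ u ∈ K, y + u ∈ intrinsicInterior ℝ s := fun u hu =>
    hball u hu.2 ((mem_closedBall_zero_iff.1 hu.1).trans_lt (by linarith))
  have hKc : IsCompact K :=
    (isCompact_closedBall 0 _).inter_right (Submodule.closed_of_finiteDimensional _)
  obtain ⟨M, hM⟩ := hKc.bddAbove_image
    (hφ.comp (continuous_const.add continuous_id).continuousOn hK)
  exact ⟨ε / 2, by positivity, M, fun u hu hun =>
    ⟨hK u ⟨mem_closedBall_zero_iff.2 hun, hu⟩, hM ⟨u, ⟨mem_closedBall_zero_iff.2 hun, hu⟩, rfl⟩⟩⟩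

end IntrinsicInterior

section Gradient

variable {F : Type*} [NormedAddCommGroup F] [InnerProductSpace ℝ F] [CompleteSpace F]
  {φ : F → ℝ} {x v : F}

theorem ConvexOn.add_inner_le_of_hasGradientAt {s : Set F} (hφ : ConvexOn ℝ s φ) {y : F}
    (hx : x ∈ s) (hy : y ∈ s) (hv : HasGradientAt φ v x) :
    φ x + inner ℝ v (y - x) ≤ φ y := by
  set L : ℝ →ᵃ[ℝ] F := AffineMap.lineMap x y
  have hv' : HasFDerivAt φ (InnerProductSpace.toDual ℝ F v) (L 0) := by
    simpa [L] using hv.hasFDerivAt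
  have hline : HasDerivAt (φ ∘ L) (inner ℝ v (y - x)) 0 := by
    simpa using hv'.comp_hasDerivAt (0 : ℝ) AffineMap.hasDerivAt_lineMap
  have := (hφ.comp_affineMap L).le_slope_of_hasDerivAt
    (by simpa [L] using hx) (by simpa [L] using hy) one_pos hline
  rw [slope_def_field] at this
  simp [L] at this
  linarith

/-- On a line through `x` normal to `A` the function vanishes except at `x`, hence, being
continuous, near `x`. -/
theorem HasGradientAt.mem_direction [FiniteDimensional ℝ F] {A : AffineSubspace ℝ F}
    (hx : x ∈ A) (hφ : ∀ z ∉ A, φ z = 0) (hv : HasGradientAt φ v x) : v ∈ A.direction := by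
  rw [← A.direction.orthogonal_orthogonal]
  intro w hw
  by_cases hw0 : w = 0
  · simp [hw0]
  set h : ℝ → ℝ := fun t => φ (x + t • w)
  have hderiv : HasDerivAt h (inner ℝ v w) 0 := by
    have hv' : HasFDerivAt φ (InnerProductSpace.toDual ℝ F v) (x + (0 : ℝ) • w) := by
      simpa using hv.hasFDerivAt
    have := hv'.comp_hasDerivAt (0 : ℝ) (((hasDerivAt_id (0 : ℝ)).smul_const w).const_add x)
    simp only [one_smul, InnerProductSpace.toDual_apply_apply] at this
    exact this
  have hoff : ∀ t ≠ (0 : ℝ), h t = 0 := fun t ht => hφ _ fun hA => by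
    have htw : t • w ∈ A.direction := by simpa using AffineSubspace.vsub_mem_direction hA hx
    have := Submodule.disjoint_def.1 A.direction.orthogonal_disjoint _ htw
      (A.directionᗮ.smul_mem t hw)
    exact (smul_eq_zero.1 this).elim ht hw0
  have hoff' : h =ᶠ[𝓝[≠] 0] 0 := eventually_nhdsWithin_of_forall hoff
  have h0 : h 0 = 0 :=
    tendsto_nhds_unique (hderiv.continuousAt.tendsto.mono_left nhdsWithin_le_nhds)
      (tendsto_const_nhds.congr' hoff'.symm)
  have hzero : h =ᶠ[𝓝 0] fun _ => 0 := by
    filter_upwards [eventually_nhdsWithin_iff.1 hoff'] with t ht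
    by_cases t0 : t = 0
    · simp [t0, h0]
    · exact ht t0
  rw [real_inner_comm]
  exact hderiv.unique ((hasDerivAt_const 0 (0 : ℝ)).congr_of_eventuallyEq hzero)

end Gradient

section Subdifferential

variable {n : ℕ} {f : E n → EReal} {x p v g : E n}

theorem eq_top_of_notMem_edom (hx : x ∉ edom f) : f x = ⊤ :=
  not_lt_top_iff.1 hx

theorem domSubdiff_subset_edom (hf : (edom f).Nonempty) : domSubdiff f ⊆ edom f := by
  rintro p ⟨v, hv⟩
  obtain ⟨z, hz⟩ := hf
  by_contra hp
  have h := hv z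
  rw [eq_top_of_notMem_edom hp, EReal.top_add_of_ne_bot (EReal.coe_ne_bot _), top_le_iff] at h
  exact hz.ne h

theorem toReal_add_inner_le_of_mem_subdiff (hbot : ∀ x, f x ≠ ⊥) {z : E n}
    (hg : g ∈ subdiff f x) (hx : x ∈ edom f) (hz : z ∈ edom f) :
    (f x).toReal + inner ℝ g (z - x) ≤ (f z).toReal := by
  have h := hg z
  rwa [← EReal.coe_toReal hx.ne (hbot x), ← EReal.coe_toReal hz.ne (hbot z), ← EReal.coe_add,
    EReal.coe_le_coe_iff] at h

theorem inner_sub_sub_nonneg_of_mem_subdiff (hbot : ∀ x, f x ≠ ⊥) (hv : v ∈ subdiff f p)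
    (hg : g ∈ subdiff f x) (hp : p ∈ edom f) (hx : x ∈ edom f) :
    0 ≤ inner ℝ (g - v) (x - p) := by
  have h₁ := toReal_add_inner_le_of_mem_subdiff hbot hv hp hx
  have h₂ := toReal_add_inner_le_of_mem_subdiff hbot hg hx hp
  rw [← neg_sub, inner_neg_right] at h₂
  rw [inner_sub_left]
  linarith

theorem convexOn_toReal_of_convexE (hbot : ∀ x, f x ≠ ⊥) (hf : convexE f)
    (hdom : Convex ℝ (edom f)) : ConvexOn ℝ (edom f) fun x => (f x).toReal := by
  refine ⟨hdom, fun x hx y hy a b ha hb hab => ?_⟩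
  have h := hf x y a b ha hb hab
  rw [← EReal.coe_toReal hx.ne (hbot x), ← EReal.coe_toReal hy.ne (hbot y), ← EReal.coe_mul,
    ← EReal.coe_mul, ← EReal.coe_add] at h
  exact (EReal.toReal_le_toReal h (hbot _) (EReal.coe_ne_top _)).trans_eq (EReal.toReal_coe _)

theorem mem_subdiff_of_hasGradientAt (hbot : ∀ x, f x ≠ ⊥)
    (hf : ConvexOn ℝ (edom f) fun x => (f x).toReal) (hx : x ∈ edom f)
    (hv : HasGradientAt (fun y => (f y).toReal) v x) : v ∈ subdiff f x := by
  intro y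
  by_cases hy : y ∈ edom f
  · have h := hf.add_inner_le_of_hasGradientAt hx hy hv
    rwa [← EReal.coe_toReal hx.ne (hbot x), ← EReal.coe_toReal hy.ne (hbot y), ← EReal.coe_add,
      EReal.coe_le_coe_iff]
  · rw [eq_top_of_notMem_edom hy]
    exact le_top

/-- `EReal.toReal ⊤ = 0`, so `fun y => (f y).toReal` vanishes off `affineSpan ℝ (edom f)`, and
its gradient, taken in the whole space, points along that span. -/
theorem hasGradientAt_toReal_mem_direction (hx : x ∈ affineSpan ℝ (edom f))
    (hv : HasGradientAt (fun y => (f y).toReal) v x) : v ∈ (affineSpan ℝ (edom f)).direction :=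
  hv.mem_direction hx fun z hz => by
    rw [eq_top_of_notMem_edom fun h => hz (subset_affineSpan ℝ _ h), EReal.toReal_top]

theorem mul_norm_le_of_mem_subdiff (hbot : ∀ x, f x ≠ ⊥) {V : Submodule ℝ (E n)} {y : E n}
    {t r M : ℝ} (hv : v ∈ subdiff f p) (hp : p ∈ edom f) (ht0 : 0 < t) (ht1 : t ≤ 1)
    (hg : g ∈ subdiff f (p + t • (y - p))) (hx : p + t • (y - p) ∈ edom f) (hgV : g ∈ V)
    (hr : 0 < r) (hM : ∀ u ∈ V, ‖u‖ ≤ r → y + u ∈ edom f ∧ (f (y + u)).toReal ≤ M) :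
    r * ‖g‖ ≤ M - (f p).toReal - inner ℝ v (y - p) := by
  set x := p + t • (y - p)
  have hxp : x - p = t • (y - p) := add_sub_cancel_left p _
  have hmono : inner ℝ v (y - p) ≤ inner ℝ g (y - p) := by
    have h := inner_sub_sub_nonneg_of_mem_subdiff hbot hv hg hp hx
    rw [hxp, real_inner_smul_right, inner_sub_left] at h
    nlinarith
  have hfx := toReal_add_inner_le_of_mem_subdiff hbot hv hp hx
  rw [hxp, real_inner_smul_right] at hfx
  set u := (r / ‖g‖) • g
  have hu : ‖u‖ ≤ r := by
    rcases eq_or_ne g 0 with rfl | hg0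
    · simpa [u] using hr.le
    · rw [norm_smul, Real.norm_of_nonneg (by positivity),
        div_mul_cancel₀ _ (norm_ne_zero_iff.2 hg0)]
  have hgu : inner ℝ g u = r * ‖g‖ := by
    rcases eq_or_ne g 0 with rfl | hg0
    · simp [u]
    · rw [real_inner_smul_right, real_inner_self_eq_norm_sq]
      field_simp
  obtain ⟨hyu, hyuM⟩ := hM u (V.smul_mem _ hgV) hu
  have hfz := toReal_add_inner_le_of_mem_subdiff hbot hg hx hyu
  have hzx : y + u - x = (1 - t) • (y - p) + u := by simp only [x]; module
  rw [hzx, inner_add_right, real_inner_smul_right, hgu] at hfz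
  nlinarith [mul_le_mul_of_nonneg_left hmono (sub_nonneg.2 ht1)]

theorem notMem_domSubdiff_of_mem_rbd (hbot : ∀ x, f x ≠ ⊥)
    (hf : ConvexOn ℝ (edom f) fun x => (f x).toReal) (hsteep : Steep f)
    (hp : p ∈ rbd (edom f)) : p ∉ domSubdiff f := by
  obtain ⟨g, hgrad, hblow⟩ := hsteep
  rintro ⟨v, hv⟩
  have hdom : (edom f).Nonempty := closure_nonempty_iff.1 ⟨p, hp.1⟩
  have hpf : p ∈ edom f := domSubdiff_subset_edom hdom ⟨v, hv⟩
  obtain ⟨y, hy⟩ := hdom.intrinsicInterior hf.1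
  have hcont : ContinuousOn (fun x => (f x).toReal) (intrinsicInterior ℝ (edom f)) :=
    fun x hx => (hgrad x hx).hasFDerivAt.continuousAt.continuousWithinAt
  obtain ⟨r, hr, M, hM⟩ := hcont.exists_forall_le_near_intrinsicInterior hy
  set xs : ℕ → E n := fun k => p + (1 / ((k : ℝ) + 1)) • (y - p)
  have ht0 (k : ℕ) : 0 < 1 / ((k : ℝ) + 1) := by positivity
  have ht1 (k : ℕ) : 1 / ((k : ℝ) + 1) ≤ 1 :=
    div_le_one_of_le₀ (by linarith [k.cast_nonneg (α := ℝ)]) (by positivity)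
  have hxs (k : ℕ) : xs k ∈ intrinsicInterior ℝ (edom f) :=
    hf.1.add_smul_sub_mem_intrinsicInterior hp.1 hy (ht0 k) (ht1 k)
  have hlim : Tendsto xs atTop (𝓝 p) := by
    simpa [xs] using
      ((tendsto_one_div_add_atTop_nhds_zero_nat (𝕜 := ℝ)).smul_const (y - p)).const_add p
  have hbound (k : ℕ) : r * ‖g (xs k)‖ ≤ M - (f p).toReal - inner ℝ v (y - p) :=
    have hxk := intrinsicInterior_subset (hxs k)
    mul_norm_le_of_mem_subdiff hbot hv hpf (ht0 k) (ht1 k)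
      (mem_subdiff_of_hasGradientAt hbot hf hxk (hgrad _ (hxs k))) hxk
      (hasGradientAt_toReal_mem_direction (subset_affineSpan ℝ _ hxk) (hgrad _ (hxs k))) hr
      fun u hu hur => (hM u hu hur).imp_left (intrinsicInterior_subset ·)
  obtain ⟨k, hk⟩ := ((hblow xs p hxs hp hlim).eventually_gt_atTop
    ((M - (f p).toReal - inner ℝ v (y - p)) / r)).exists
  rw [div_lt_iff₀ hr] at hk
  linarith [hbound k]

end Subdifferential

theorem stmt0_general {n : ℕ} (f : E n → EReal)
    (hproper : properE f) (hconv : convexE f)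
    (hdom_ne : (edom f).Nonempty) (hdom_conv : Convex ℝ (edom f))
    (hsteep : Steep f) :
    (∀ p ∈ rbd (edom f), p ∉ domSubdiff f) ∧
      domSubdiff f = intrinsicInterior ℝ (edom f) := by
  have hφ := convexOn_toReal_of_convexE hproper.1 hconv hdom_conv
  have hrbd : ∀ p ∈ rbd (edom f), p ∉ domSubdiff f := fun p hp =>
    notMem_domSubdiff_of_mem_rbd hproper.1 hφ hsteep hp
  refine ⟨hrbd, subset_antisymm (fun x hx => ?_) (fun x hx => ?_)⟩
  · by_contra hxr
    exact hrbd x ⟨subset_closure (domSubdiff_subset_edom hdom_ne hx), hxr⟩ hx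
  · obtain ⟨g, hgrad, -⟩ := hsteep
    exact ⟨g x, mem_subdiff_of_hasGradientAt hproper.1 hφ (intrinsicInterior_subset hx)
      (hgrad x hx)⟩

theorem stmt0 {n : ℕ} (f : E n → EReal)
    (hlsc : LowerSemicontinuous f) (hproper : properE f) (hconv : convexE f)
    (hdom_ne : (edom f).Nonempty) (hdom_conv : Convex ℝ (edom f))
    (hsteep : Steep f) :
    (∀ p ∈ rbd (edom f), p ∉ domSubdiff f) ∧
      domSubdiff f = intrinsicInterior ℝ (edom f) :=
  stmt0_general f hproper hconv hdom_ne hdom_conv hsteep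

end
end

section
/- Let ψ : ℝⁿ → ℝ ∪ {+∞} be closed, proper and σ-strongly convex with σ > 0 and dom ψ = Ω nonempty closed convex, let C = ∇ψ*, let U : Ω → ℝⁿ satisfy ⟨U(x) − U(x′), x − x′⟩ ≤ 0 for all x, x′ ∈ Ω (i.e. −U is monotone), let γ > 0, and let z̄ ∈ ℝⁿ satisfy z̄ = U(C(z̄)). Then for every z ∈ ℝⁿ, the Lyapunov function V(z) = ψ*(z) − ψ*(z̄) − ⟨C(z̄), z − z̄⟩ (the Bregman divergence D_{ψ*}(z, z̄)) satisfies the decrease inequality along the discounted mirror descent vector field: ⟨C(z) − C(z̄), γ(U(C(z)) − z)⟩ ≤ −γσ ‖C(z) − C(z̄)‖₂². -/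
/-! The supremum defining `ψ* z` is attained: `ψ - σ/2 ‖·‖²` is convex and lower semicontinuous
on the closed set `Ω`, so it has an affine minorant, `ψ` grows quadratically and the sublevel sets
of `ψ - ⟪·, z⟫` are compact. The maximiser is `C z`, because `ψ*` lies above the affine function
`w ↦ ⟪x, w⟫ - ψ x` for every `x` and touches it at `z` when `x` is the maximiser. Strong convexity
makes `ψ - ⟪·, z⟫` grow quadratically away from its minimiser; adding this at `z` and at `z̄` gives
`σ ‖C z - C z̄‖² ≤ ⟪C z - C z̄, z - z̄⟫`, and monotonicity of `-U` with `z̄ = U (C z̄)` finishes. -/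

open Set Filter Topology

noncomputable section

section StrongConvexity

variable {F : Type*} [NormedAddCommGroup F] [InnerProductSpace ℝ F] {s : Set F} {f : F → ℝ} {σ : ℝ}

theorem StrongConvexOn.exists_affine_add_sq_le (hs : IsClosed s) (hf : StrongConvexOn s σ f)
    (hlsc : LowerSemicontinuousOn f s) :
    ∃ (l : StrongDual ℝ F) (c : ℝ), ∀ x ∈ s, l x + c + σ / 2 * ‖x‖ ^ 2 ≤ f x := by
  rcases s.eq_empty_or_nonempty with rfl | ⟨x₀, hx₀⟩
  · exact ⟨0, 0, by simp⟩
  have hlsc' : LowerSemicontinuousOn (fun x ↦ f x - σ / 2 * ‖x‖ ^ 2) s := by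
    have hq : Continuous fun x : F ↦ -(σ / 2 * ‖x‖ ^ 2) := by fun_prop
    simpa only [sub_eq_add_neg] using hlsc.add hq.continuousOn.lowerSemicontinuousOn
  obtain ⟨l, c, hle, -⟩ := (strongConvexOn_iff_convex.1 hf).exists_affine_le_of_lt (𝕜 := ℝ)
    hx₀ (sub_one_lt _) hs hlsc'
  refine ⟨l, c, fun x hx ↦ ?_⟩
  have := hle ⟨x, hx⟩
  simp only [Pi.add_apply, domRestrict_apply, Function.comp_apply, RCLike.re_to_real,
    Function.const_apply] at this
  linarith

theorem StrongConvexOn.exists_isMinOn [ProperSpace F] (hne : s.Nonempty) (hs : IsClosed s)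
    (hσ : 0 < σ) (hf : StrongConvexOn s σ f) (hlsc : LowerSemicontinuousOn f s) :
    ∃ x ∈ s, IsMinOn f s x := by
  obtain ⟨x₀, hx₀⟩ := hne
  obtain ⟨l, c, hlc⟩ := hf.exists_affine_add_sq_le hs hlsc
  set K := {x | x ∈ s ∧ f x ≤ f x₀}
  have hK : IsCompact K := by
    refine Metric.isCompact_of_isClosed_isBounded
      (((lowerSemicontinuousOn_iff_isClosed_epigraph hs).1 hlsc).preimage
        (by fun_prop : Continuous fun x : F ↦ (x, f x₀))) ?_
    refine (Metric.isBounded_iff_subset_closedBall 0).2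
      ⟨1 + 2 * (‖l‖ + |f x₀ - c|) / σ, fun x ⟨hx, hfx⟩ ↦ ?_⟩
    rw [mem_closedBall_zero_iff]
    have hlx : -(‖l‖ * ‖x‖) ≤ l x := neg_le_of_abs_le (l.le_opNorm x)
    have hquad : σ / 2 * ‖x‖ ^ 2 ≤ ‖l‖ * ‖x‖ + |f x₀ - c| := by
      linarith [hlc x hx, le_abs_self (f x₀ - c)]
    by_contra! hgt
    have h1 : σ * (1 + 2 * (‖l‖ + |f x₀ - c|) / σ) = σ + 2 * (‖l‖ + |f x₀ - c|) := by
      field_simp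
    nlinarith [norm_nonneg l, abs_nonneg (f x₀ - c), mul_lt_mul_of_pos_left hgt hσ]
  obtain ⟨x, ⟨hx, hxx₀⟩, hxK⟩ := (hlsc.mono fun _ hy ↦ hy.1).exists_isMinOn
    (show K.Nonempty from ⟨x₀, hx₀, le_rfl⟩) hK
  refine ⟨x, hx, fun y hy ↦ ?_⟩
  by_cases hyx₀ : f y ≤ f x₀
  · exact hxK ⟨hy, hyx₀⟩
  · exact hxx₀.trans (not_le.1 hyx₀).le

theorem StrongConvexOn.add_sq_le_of_isMinOn (hf : StrongConvexOn s σ f) {x y : F} (hx : x ∈ s)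
    (hy : y ∈ s) (hmin : IsMinOn f s x) : f x + σ / 2 * ‖y - x‖ ^ 2 ≤ f y := by
  have key : ∀ t ∈ Ioo (0 : ℝ) 1, f x + (1 - t) * (σ / 2 * ‖y - x‖ ^ 2) ≤ f y := by
    rintro t ⟨ht0, ht1⟩
    have hab : 1 - t + t = 1 := sub_add_cancel 1 t
    have hconv := hf.2 hx hy (sub_nonneg.2 ht1.le) ht0.le hab
    have hmin' : f x ≤ f ((1 - t) • x + t • y) :=
      hmin (hf.1 hx hy (sub_nonneg.2 ht1.le) ht0.le hab)
    simp only [smul_eq_mul] at hconv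
    rw [norm_sub_rev] at hconv
    refine le_of_mul_le_mul_left ?_ ht0
    linarith
  have hlim : Tendsto (fun t : ℝ ↦ f x + (1 - t) * (σ / 2 * ‖y - x‖ ^ 2)) (𝓝[>] 0)
      (𝓝 (f x + σ / 2 * ‖y - x‖ ^ 2)) := by
    have hcont : Continuous fun t : ℝ ↦ f x + (1 - t) * (σ / 2 * ‖y - x‖ ^ 2) := by fun_prop
    exact (hcont.tendsto' 0 _ (by simp)).mono_left nhdsWithin_le_nhds
  exact le_of_tendsto hlim (eventually_of_mem (Ioo_mem_nhdsGT one_pos) key)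

theorem StrongConvexOn.sub_inner (hf : StrongConvexOn s σ f) (z : F) :
    StrongConvexOn s σ (fun x ↦ f x - inner ℝ x z) := by
  rw [strongConvexOn_iff_convex] at hf ⊢
  have hlin : ConcaveOn ℝ s (fun x ↦ inner ℝ x z) := ((innerₛₗ ℝ).flip z).concaveOn hf.1
  exact (hf.sub hlin).congr fun x _ ↦ by simp only [Pi.sub_apply]; ring

theorem StrongConvexOn.mul_sq_le_inner_of_isMinOn (hf : StrongConvexOn s σ f) {x x' z z' : F}
    (hx : x ∈ s) (hx' : x' ∈ s) (hmin : IsMinOn (fun y ↦ f y - inner ℝ y z) s x)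
    (hmin' : IsMinOn (fun y ↦ f y - inner ℝ y z') s x') :
    σ * ‖x - x'‖ ^ 2 ≤ inner ℝ (x - x') (z - z') := by
  have h := (hf.sub_inner z).add_sq_le_of_isMinOn hx hx' hmin
  have h' := (hf.sub_inner z').add_sq_le_of_isMinOn hx' hx hmin'
  rw [norm_sub_rev] at h
  simp only [inner_sub_left, inner_sub_right] at h h' ⊢
  linarith

theorem HasGradientAt.eq_of_inner_add_le [CompleteSpace F] {φ : F → ℝ} {g x z : F} {c : ℝ}
    (hφ : HasGradientAt φ g z) (hle : ∀ w, inner ℝ x w + c ≤ φ w)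
    (heq : φ z = inner ℝ x z + c) : g = x := by
  have hmin : IsLocalMin (fun w ↦ φ w - inner ℝ x w) z :=
    Eventually.of_forall fun w ↦ by linarith [hle w]
  have hderiv := hφ.hasFDerivAt.sub ((innerSL ℝ x).hasFDerivAt (x := z))
  have hzero := hmin.hasFDerivAt_eq_zero hderiv
  refine ext_inner_right ℝ fun w ↦ ?_
  have := congrArg (fun L ↦ L w) hzero
  simpa [sub_eq_zero] using this

end StrongConvexity

section Conjugate

variable {n : ℕ} {ψ : E n → EReal}

theorem coe_toReal_of_mem_edom (hb : ∀ x, ψ x ≠ ⊥) {x : E n} (hx : x ∈ edom ψ) :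
    (((ψ x).toReal : ℝ) : EReal) = ψ x :=
  EReal.coe_toReal hx.ne (hb x)

theorem strongConvexOn_toReal {σ : ℝ} (hb : ∀ x, ψ x ≠ ⊥) (hsc : stronglyConvexE σ ψ) :
    StrongConvexOn (edom ψ) σ (fun x ↦ (ψ x).toReal) := by
  have key : ∀ x ∈ edom ψ, ∀ y ∈ edom ψ, ∀ a b : ℝ, 0 ≤ a → 0 ≤ b → a + b = 1 →
      ψ (a • x + b • y) ≤ ((a * ((ψ x).toReal - σ / 2 * ‖x‖ ^ 2)
        + b * ((ψ y).toReal - σ / 2 * ‖y‖ ^ 2) + σ / 2 * ‖a • x + b • y‖ ^ 2 : ℝ) : EReal) := by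
    intro x hx y hy a b ha hb' hab
    have h := hsc x y a b ha hb' hab
    beta_reduce at h
    rw [← coe_toReal_of_mem_edom hb hx, ← coe_toReal_of_mem_edom hb hy, ← EReal.coe_sub,
      ← EReal.coe_sub, ← EReal.coe_mul, ← EReal.coe_mul, ← EReal.coe_add] at h
    rw [EReal.coe_add, ← EReal.sub_le_iff_le_add (.inl (EReal.coe_ne_bot _))
      (.inl (EReal.coe_ne_top _))]
    exact h
  have hconv : Convex ℝ (edom ψ) := fun x hx y hy a b ha hb' hab ↦
    (key x hx y hy a b ha hb' hab).trans_lt (EReal.coe_lt_top _)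
  refine strongConvexOn_iff_convex.2 ⟨hconv, fun x hx y hy a b ha hb' hab ↦ ?_⟩
  have h := EReal.toReal_le_toReal (key x hx y hy a b ha hb' hab) (hb _) (EReal.coe_ne_top _)
  rw [EReal.toReal_coe] at h
  simp only [smul_eq_mul]
  linarith

theorem lowerSemicontinuousOn_toReal (hlsc : LowerSemicontinuous ψ) (hb : ∀ x, ψ x ≠ ⊥) :
    LowerSemicontinuousOn (fun x ↦ (ψ x).toReal) (edom ψ) := by
  intro x hx y hy
  have hyx : (y : EReal) < ψ x := by rwa [← coe_toReal_of_mem_edom hb hx, EReal.coe_lt_coe_iff]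
  filter_upwards [nhdsWithin_le_nhds (hlsc x y hyx), self_mem_nhdsWithin] with x' hx' hx'dom
  rw [← coe_toReal_of_mem_edom hb hx'dom] at hx'
  exact EReal.coe_lt_coe_iff.1 hx'

theorem coe_inner_sub_toReal_le_conjE (hb : ∀ x, ψ x ≠ ⊥) {x : E n} (hx : x ∈ edom ψ) (z : E n) :
    ((inner ℝ x z - (ψ x).toReal : ℝ) : EReal) ≤ conjE ψ z := by
  rw [EReal.coe_sub, coe_toReal_of_mem_edom hb hx]
  exact le_iSup (fun x ↦ ((inner ℝ x z : ℝ) : EReal) - ψ x) x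

theorem conjE_eq_of_isMinOn (hb : ∀ x, ψ x ≠ ⊥) {x z : E n} (hx : x ∈ edom ψ)
    (hmin : IsMinOn (fun y ↦ (ψ y).toReal - inner ℝ y z) (edom ψ) x) :
    conjE ψ z = ((inner ℝ x z - (ψ x).toReal : ℝ) : EReal) := by
  refine le_antisymm (iSup_le fun y ↦ ?_) (coe_inner_sub_toReal_le_conjE hb hx z)
  by_cases hy : y ∈ edom ψ
  · have h : (ψ x).toReal - inner ℝ x z ≤ (ψ y).toReal - inner ℝ y z := hmin hy
    rw [← coe_toReal_of_mem_edom hb hy, ← EReal.coe_sub, EReal.coe_le_coe_iff]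
    linarith
  · simp [show ψ y = ⊤ from not_lt_top_iff.1 hy]

theorem exists_isMinOn_toReal_sub_inner {σ : ℝ} (hne : (edom ψ).Nonempty)
    (hcl : IsClosed (edom ψ)) (hlsc : LowerSemicontinuous ψ) (hb : ∀ x, ψ x ≠ ⊥) (hσ : 0 < σ)
    (hsc : stronglyConvexE σ ψ) (z : E n) :
    ∃ x ∈ edom ψ, IsMinOn (fun y ↦ (ψ y).toReal - inner ℝ y z) (edom ψ) x := by
  refine ((strongConvexOn_toReal hb hsc).sub_inner z).exists_isMinOn hne hcl hσ ?_
  simpa only [sub_eq_add_neg] using (lowerSemicontinuousOn_toReal hlsc hb).add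
    (by fun_prop : Continuous fun y : E n ↦ -inner ℝ y z).continuousOn.lowerSemicontinuousOn

theorem eq_of_hasGradientAt_conjE (hb : ∀ x, ψ x ≠ ⊥) (hfin : ∀ w, conjE ψ w ≠ ⊤)
    {g x z : E n} (hC : HasGradientAt (fun w ↦ (conjE ψ w).toReal) g z) (hx : x ∈ edom ψ)
    (hmin : IsMinOn (fun y ↦ (ψ y).toReal - inner ℝ y z) (edom ψ) x) : g = x := by
  refine hC.eq_of_inner_add_le (c := -(ψ x).toReal) (fun w ↦ ?_) ?_
  · have h := EReal.toReal_le_toReal (coe_inner_sub_toReal_le_conjE hb hx w)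
      (EReal.coe_ne_bot _) (hfin w)
    rw [EReal.toReal_coe] at h
    linarith
  · rw [conjE_eq_of_isMinOn hb hx hmin, EReal.toReal_coe, sub_eq_add_neg]

end Conjugate

theorem stmt16_general {n : ℕ} (Ω : Set (E n)) (hΩne : Ω.Nonempty) (hΩcl : IsClosed Ω)
    (ψ : E n → EReal) (hlsc : LowerSemicontinuous ψ) (hproper : properE ψ)
    (σ : ℝ) (hσ : 0 < σ) (hsc : stronglyConvexE σ ψ) (hdom : edom ψ = Ω)
    (C : E n → E n) (hC : ∀ z, HasGradientAt (fun w => (conjE ψ w).toReal) (C z) z)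
    (U : E n → E n)
    (hU : ∀ x ∈ Ω, ∀ x' ∈ Ω, (inner ℝ (U x - U x') (x - x') : ℝ) ≤ 0)
    (γ : ℝ) (hγ : 0 < γ)
    (zb : E n) (hzb : zb = U (C zb)) :
    ∀ z : E n, (inner ℝ (C z - C zb) (γ • (U (C z) - z)) : ℝ) ≤ -(γ * σ) * ‖C z - C zb‖ ^ 2 := by
  subst hdom
  intro z
  have hb : ∀ x, ψ x ≠ ⊥ := hproper.1
  have hmin := exists_isMinOn_toReal_sub_inner hΩne hΩcl hlsc hb hσ hsc
  have hfin : ∀ w, conjE ψ w ≠ ⊤ := fun w ↦ by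
    obtain ⟨x, hx, hxmin⟩ := hmin w
    rw [conjE_eq_of_isMinOn hb hx hxmin]
    exact EReal.coe_ne_top _
  obtain ⟨x, hx, hxmin⟩ := hmin z
  obtain ⟨xb, hxb, hxbmin⟩ := hmin zb
  obtain rfl : C z = x := eq_of_hasGradientAt_conjE hb hfin (hC z) hx hxmin
  obtain rfl : C zb = xb := eq_of_hasGradientAt_conjE hb hfin (hC zb) hxb hxbmin
  have hstrong := (strongConvexOn_toReal hb hsc).mul_sq_le_inner_of_isMinOn hx hxb hxmin hxbmin
  have hmono := hU _ hx _ hxb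
  rw [← hzb] at hmono
  calc inner ℝ (C z - C zb) (γ • (U (C z) - z))
      = γ * (inner ℝ (U (C z) - zb) (C z - C zb) - inner ℝ (C z - C zb) (z - zb)) := by
        rw [real_inner_smul_right, real_inner_comm (C z - C zb) (U (C z) - zb)]
        simp only [inner_sub_right]
        ring
    _ ≤ γ * (0 - σ * ‖C z - C zb‖ ^ 2) := by gcongr
    _ = -(γ * σ) * ‖C z - C zb‖ ^ 2 := by ring

theorem stmt16 {n : ℕ} (Ω : Set (E n)) (hΩne : Ω.Nonempty) (hΩcl : IsClosed Ω)
    (hΩconv : Convex ℝ Ω)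
    (ψ : E n → EReal) (hlsc : LowerSemicontinuous ψ) (hproper : properE ψ)
    (σ : ℝ) (hσ : 0 < σ) (hsc : stronglyConvexE σ ψ) (hdom : edom ψ = Ω)
    (C : E n → E n) (hC : ∀ z, HasGradientAt (fun w => (conjE ψ w).toReal) (C z) z)
    (U : E n → E n)
    (hU : ∀ x ∈ Ω, ∀ x' ∈ Ω, (inner ℝ (U x - U x') (x - x') : ℝ) ≤ 0)
    (γ : ℝ) (hγ : 0 < γ)
    (zb : E n) (hzb : zb = U (C zb)) :
    ∀ z : E n, (inner ℝ (C z - C zb) (γ • (U (C z) - z)) : ℝ) ≤ -(γ * σ) * ‖C z - C zb‖ ^ 2 :=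
  stmt16_general Ω hΩne hΩcl ψ hlsc hproper σ hσ hsc hdom C hC U hU γ hγ zb hzb

end
end
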